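/- Fix integers r ≥ 2, t ≥ 1, and for integers m ≥ k ≥ 0 let 𝓖(m,k) be the family of all k-element subsets F of [m] such that there exists an integer j ≥ 0 with |F ∩ [t + r·j]| ≥ t + (r−1)·j. Then for all n ≥ k, |𝓖(n+1,k)| / C(n+1,k) ≤ |𝓖(n,k)| / C(n,k). -/

import Mathlib

/-!
Removing a point `x ∉ F` from `[n+1]` and shifting the points above `x` down by one sends `F` to
a `k`-subset of `[n]` whose prefix counts `|F ∩ [s]|` can only have grown, so members of
`𝓖(n+1,k)` go to members of `𝓖(n,k)`. Since `(F, x)` is recovered from its image and `x`, this gives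
`|𝓖(n+1,k)| (n+1-k) ≤ |𝓖(n,k)| (n+1)`, and `C(n,k) (n+1) = C(n+1,k) (n+1-k)` turns it into the
inequality of ratios.
-/

/-- `hitFamily m k r t` is the family of all `k`-element subsets `F` of `[m]` such that
there exists `j ≥ 0` with `|F ∩ [t + r·j]| ≥ t + (r−1)·j`; in lattice-path terms,
it corresponds to the lattice paths from `(0,0)` to `(m−k,k)` hitting `y = (r−1)x + t`. -/
noncomputable def hitFamily (m k r t : ℕ) : Finset (Finset ℕ) := by
  classical
  exact (Finset.powersetCard k (Finset.Icc 1 m)).filter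
    (fun F => ∃ j : ℕ, t + (r - 1) * j ≤ (F ∩ Finset.Icc 1 (t + r * j)).card)

open Finset

def collapseAt (x a : ℕ) : ℕ := if a < x then a else a - 1

def expandAt (x b : ℕ) : ℕ := if b < x then b else b + 1

section collapse

variable {F : Finset ℕ} {x : ℕ}

lemma expandAt_collapseAt {a : ℕ} (hax : a ≠ x) : expandAt x (collapseAt x a) = a := by
  unfold expandAt collapseAt
  split_ifs <;> omega

lemma image_expandAt_image_collapseAt (hx : x ∉ F) :
    (F.image (collapseAt x)).image (expandAt x) = F := by
  rw [image_image]
  exact (image_congr fun a ha => expandAt_collapseAt (ne_of_mem_of_not_mem ha hx)).trans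
    image_id

lemma injOn_collapseAt (hx : x ∉ F) : Set.InjOn (collapseAt x) F :=
  Set.LeftInvOn.injOn fun _ ha => expandAt_collapseAt (ne_of_mem_of_not_mem ha hx)

lemma card_image_collapseAt (hx : x ∉ F) : (F.image (collapseAt x)).card = F.card :=
  card_image_of_injOn (injOn_collapseAt hx)

lemma image_collapseAt_subset_Icc {n : ℕ} (hF : F ⊆ Icc 1 (n + 1)) (hx : x ∈ Icc 1 (n + 1))
    (hxF : x ∉ F) : F.image (collapseAt x) ⊆ Icc 1 n := by
  intro b hb
  obtain ⟨a, ha, rfl⟩ := mem_image.1 hb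
  have ha' := mem_Icc.1 (hF ha)
  have hx' := mem_Icc.1 hx
  have hax := ne_of_mem_of_not_mem ha hxF
  simp only [mem_Icc, collapseAt]
  split_ifs <;> omega

lemma card_inter_Icc_le_image_collapseAt (hx : 1 ≤ x) (hxF : x ∉ F) (s : ℕ) :
    (F ∩ Icc 1 s).card ≤ (F.image (collapseAt x) ∩ Icc 1 s).card := by
  refine card_le_card_of_injOn (collapseAt x) (fun a ha => ?_)
    ((injOn_collapseAt hxF).mono fun a ha => (mem_inter.1 ha).1)
  obtain ⟨haF, haI⟩ := mem_inter.1 ha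
  have ha' := mem_Icc.1 haI
  have hax := ne_of_mem_of_not_mem haF hxF
  refine mem_inter.2 ⟨mem_image_of_mem _ haF, ?_⟩
  simp only [mem_Icc, collapseAt]
  split_ifs <;> omega

end collapse

lemma card_mul_le_card_mul_of_image_collapseAt_mem {n k : ℕ} {𝒜 ℬ : Finset (Finset ℕ)}
    (h𝒜 : 𝒜 ⊆ powersetCard k (Icc 1 (n + 1)))
    (hℬ : ∀ F ∈ 𝒜, ∀ x ∈ Icc 1 (n + 1), x ∉ F → F.image (collapseAt x) ∈ ℬ) :
    𝒜.card * (n + 1 - k) ≤ ℬ.card * (n + 1) := by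
  classical
  have card_pairs : (𝒜.sigma fun F => Icc 1 (n + 1) \ F).card = 𝒜.card * (n + 1 - k) := by
    rw [card_sigma, sum_const_nat fun F hF => ?_]
    obtain ⟨hsub, hcard⟩ := mem_powersetCard.1 (h𝒜 hF)
    rw [card_sdiff_of_subset hsub, Nat.card_Icc, hcard, Nat.add_sub_cancel]
  calc 𝒜.card * (n + 1 - k) = (𝒜.sigma fun F => Icc 1 (n + 1) \ F).card := card_pairs.symm
    _ ≤ (ℬ ×ˢ Icc 1 (n + 1)).card := by
      refine card_le_card_of_injOn (fun p => (p.1.image (collapseAt p.2), p.2)) ?_ ?_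
      · rintro ⟨F, x⟩ hp
        obtain ⟨hF, hx⟩ := mem_sigma.1 hp
        obtain ⟨hxI, hxF⟩ := mem_sdiff.1 hx
        exact mem_product.2 ⟨hℬ F hF x hxI hxF, hxI⟩
      · rintro ⟨F, x⟩ hp ⟨F', x'⟩ hp' h
        obtain ⟨himage, rfl : x = x'⟩ := Prod.mk.inj h
        have hxF : x ∉ F := (mem_sdiff.1 (mem_sigma.1 hp).2).2
        have hxF' : x ∉ F' := (mem_sdiff.1 (mem_sigma.1 hp').2).2
        obtain rfl : F = F' := by
          rw [← image_expandAt_image_collapseAt hxF, ← image_expandAt_image_collapseAt hxF']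
          exact congrArg _ himage
        rfl
    _ = ℬ.card * (n + 1) := by rw [card_product, Nat.card_Icc, Nat.add_sub_cancel]

lemma mem_hitFamily {m k r t : ℕ} {F : Finset ℕ} :
    F ∈ hitFamily m k r t ↔ F ∈ powersetCard k (Icc 1 m) ∧
      ∃ j : ℕ, t + (r - 1) * j ≤ (F ∩ Icc 1 (t + r * j)).card := by
  classical
  unfold hitFamily
  exact mem_filter

lemma image_collapseAt_mem_hitFamily {n k r t x : ℕ} {F : Finset ℕ}
    (hF : F ∈ hitFamily (n + 1) k r t) (hx : x ∈ Icc 1 (n + 1)) (hxF : x ∉ F) :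
    F.image (collapseAt x) ∈ hitFamily n k r t := by
  obtain ⟨hFk, j, hj⟩ := mem_hitFamily.1 hF
  obtain ⟨hsub, hcard⟩ := mem_powersetCard.1 hFk
  refine mem_hitFamily.2 ⟨mem_powersetCard.2 ⟨image_collapseAt_subset_Icc hsub hx hxF, ?_⟩,
    j, hj.trans (card_inter_Icc_le_image_collapseAt (mem_Icc.1 hx).1 hxF _)⟩
  rw [card_image_collapseAt hxF, hcard]

lemma card_hitFamily_succ_mul_le (n k r t : ℕ) :
    (hitFamily (n + 1) k r t).card * (n + 1 - k) ≤ (hitFamily n k r t).card * (n + 1) :=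
  card_mul_le_card_mul_of_image_collapseAt_mem (fun _ hF => (mem_hitFamily.1 hF).1)
    fun _ hF _ hx hxF => image_collapseAt_mem_hitFamily hF hx hxF

lemma div_choose_succ_le_div_choose {a b n k : ℕ} (hk : k ≤ n)
    (h : a * (n + 1 - k) ≤ b * (n + 1)) :
    (a : ℝ) / (n + 1).choose k ≤ (b : ℝ) / n.choose k := by
  have hchoose := Nat.choose_mul_succ_eq n k
  rw [div_le_div_iff₀ (mod_cast Nat.choose_pos (by omega)) (mod_cast Nat.choose_pos hk)]
  refine mod_cast Nat.le_of_mul_le_mul_right ?_ (by omega : 0 < n + 1 - k)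
  calc a * n.choose k * (n + 1 - k) = a * (n + 1 - k) * n.choose k := by ring
    _ ≤ b * (n + 1) * n.choose k := Nat.mul_le_mul_right _ h
    _ = b * (n + 1).choose k * (n + 1 - k) := by rw [mul_assoc, mul_comm (n + 1), hchoose]; ring

theorem hitFamily_ratio_anti_in_ground_general
    (r t : ℕ) :
    ∀ n k : ℕ, k ≤ n →
      ((hitFamily (n + 1) k r t).card : ℝ) / (Nat.choose (n + 1) k) ≤
        ((hitFamily n k r t).card : ℝ) / (Nat.choose n k) :=
  fun n k hk => div_choose_succ_le_div_choose hk (card_hitFamily_succ_mul_le n k r t)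

theorem hitFamily_ratio_anti_in_ground
    (r t : ℕ) (hr : 2 ≤ r) (ht : 1 ≤ t) :
    ∀ n k : ℕ, k ≤ n →
      ((hitFamily (n + 1) k r t).card : ℝ) / (Nat.choose (n + 1) k) ≤
        ((hitFamily n k r t).card : ℝ) / (Nat.choose n k) :=
  hitFamily_ratio_anti_in_ground_general r t
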